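/- arXiv:2009.09419 — 4 statements merged into one kernel-verified Lean document; each statement's English description precedes it below -/
import Mathlib

section
/- Let 0 < λ < 1, a < b, C ∈ ℝ, and let x : (a,b] → ℝ be continuous with lim_{t→a⁺} (t−a)^{1−λ} x(t) = C. Then the Riemann–Liouville fractional integral of order 1−λ of x satisfies lim_{t→a⁺} ({}_aI^{1−λ}_t x)(t) = C·Γ(λ). In particular, a function satisfying the weighted initial condition with value C satisfies the integral-type initial condition with value B = C·Γ(λ). -/
/-!
Put `w s = (s - a) ^ (1 - λ) * x s`. Then `(t - s) ^ (-λ) * x s = k_t s * w s` with the kernel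
`k_t s = (s - a) ^ (λ - 1) * (t - s) ^ (-λ)`, which is nonnegative on `(a, t]` and, by the Beta
integral, has total mass `B(λ, 1 - λ) = Γ(λ) Γ(1 - λ)` for every `t`. So `Γ(1 - λ) · I^{1-λ} x (t)` is a
`k_t`-weighted integral of `w` over `(a, t]`, where `w` is uniformly close to `C` once `t` is close to
`a`, hence it tends to `C Γ(λ) Γ(1 - λ)`.
-/

open MeasureTheory Set Filter Topology

/-- Riemann–Liouville fractional integral of order `β` with lower limit `a`
(for `β = 0` it is the identity). -/
noncomputable def rlInt (a β : ℝ) (g : ℝ → ℝ) (t : ℝ) : ℝ :=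
  if β = 0 then g t
  else (1 / Real.Gamma β) * ∫ s in a..t, (t - s) ^ (β - 1) * g s

/-- Hilfer fractional derivative of order `μ` and type `ν` with lower limit `a`. -/
noncomputable def hilferD (a μ ν : ℝ) (x : ℝ → ℝ) (t : ℝ) : ℝ :=
  rlInt a (ν * (1 - μ)) (deriv (rlInt a ((1 - ν) * (1 - μ)) x)) t

theorem integral_sub_rpow_mul_sub_rpow {p q a t : ℝ} (hp : 0 < p) (hq : 0 < q) (hat : a < t) :
    ∫ s in a..t, (s - a) ^ (p - 1) * (t - s) ^ (q - 1)
      = (t - a) ^ (p + q - 1) * ProbabilityTheory.beta p q := by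
  have hT : 0 < t - a := sub_pos.2 hat
  have hshift : ∫ s in a..t, (s - a) ^ (p - 1) * (t - s) ^ (q - 1)
      = ∫ y in 0..t - a, y ^ (p - 1) * (t - a - y) ^ (q - 1) := by
    simpa using intervalIntegral.integral_comp_sub_right (a := a) (b := t)
      (fun y => y ^ (p - 1) * (t - a - y) ^ (q - 1)) a
  have hbeta : Complex.betaIntegral p q = ProbabilityTheory.beta p q := by
    rw [Complex.betaIntegral_eq_Gamma_mul_div _ _ (by simpa) (by simpa), ProbabilityTheory.beta,
      ← Complex.ofReal_add, Complex.Gamma_ofReal, Complex.Gamma_ofReal, Complex.Gamma_ofReal]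
    norm_num
  have hcomplex := Complex.betaIntegral_scaled p q hT
  rw [hbeta] at hcomplex
  rw [hshift]
  apply Complex.ofReal_injective
  rw [← intervalIntegral.integral_ofReal, Complex.ofReal_mul, Complex.ofReal_cpow hT.le]
  push_cast at hcomplex ⊢
  rw [← hcomplex]
  refine intervalIntegral.integral_congr fun y hy => ?_
  rw [uIcc_of_le hT.le] at hy
  simp only [Complex.ofReal_cpow hy.1, Complex.ofReal_cpow (sub_nonneg.2 hy.2)]
  norm_num

theorem abs_integral_mul_sub_le {α : Type*} [MeasurableSpace α] {μ : Measure α} {k w : α → ℝ}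
    {C η : ℝ} (hk : Integrable k μ) (hk0 : 0 ≤ᵐ[μ] k) (hw : AEStronglyMeasurable w μ)
    (hwC : ∀ᵐ s ∂μ, |w s - C| ≤ η) :
    |∫ s, k s * w s ∂μ - (∫ s, k s ∂μ) * C| ≤ η * ∫ s, k s ∂μ := by
  have hdev : Integrable (fun s => (w s - C) * k s) μ :=
    hk.bdd_mul (hw.sub aestronglyMeasurable_const) hwC
  have hsplit : ∫ s, k s * w s ∂μ = ∫ s, (w s - C) * k s ∂μ + (∫ s, k s ∂μ) * C := by
    rw [← integral_mul_const, ← integral_add hdev (hk.mul_const C)]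
    congr 1 with s; ring
  rw [hsplit, add_sub_cancel_right, ← integral_const_mul, ← Real.norm_eq_abs]
  refine norm_integral_le_of_norm_le (hk.const_mul η) ?_
  filter_upwards [hk0, hwC] with s hks hs
  rw [norm_mul, Real.norm_eq_abs, Real.norm_of_nonneg hks]
  exact mul_le_mul_of_nonneg_right hs hks

lemma rlInt_one_sub_eq_setIntegral {lam a t : ℝ} (hlam : lam ≠ 1) (hat : a ≤ t) (x : ℝ → ℝ) :
    rlInt a (1 - lam) x t = 1 / Real.Gamma (1 - lam) *
      ∫ s in Ioc a t, (s - a) ^ (lam - 1) * (t - s) ^ (1 - lam - 1) * ((s - a) ^ (1 - lam) * x s) := by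
  rw [rlInt, if_neg (sub_ne_zero.2 hlam.symm), intervalIntegral.integral_of_le hat]
  congr 1
  refine setIntegral_congr_fun measurableSet_Ioc fun s hs => ?_
  have hsa : 0 < s - a := sub_pos.2 hs.1
  rw [mul_mul_mul_comm, ← mul_assoc, ← Real.rpow_add hsa]
  simp

lemma abs_rlInt_one_sub_sub_le {lam a t C η : ℝ} (h0 : 0 < lam) (h1 : lam < 1) (hat : a < t)
    {x : ℝ → ℝ} (hx : ContinuousOn x (Ioc a t))
    (hwC : ∀ s ∈ Ioc a t, |(s - a) ^ (1 - lam) * x s - C| ≤ η) :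
    |rlInt a (1 - lam) x t - C * Real.Gamma lam| ≤ η * Real.Gamma lam := by
  set k : ℝ → ℝ := fun s => (s - a) ^ (lam - 1) * (t - s) ^ (1 - lam - 1)
  have hΓ : 0 < Real.Gamma lam := Real.Gamma_pos_of_pos h0
  have hΓ' : 0 < Real.Gamma (1 - lam) := Real.Gamma_pos_of_pos (by linarith)
  have hk_int : ∫ s in a..t, k s = Real.Gamma lam * Real.Gamma (1 - lam) := by
    rw [integral_sub_rpow_mul_sub_rpow h0 (by linarith) hat, ProbabilityTheory.beta]
    simp
  -- a non-integrable function would have integral `0`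
  have hk : IntegrableOn k (Ioc a t) :=
    (intervalIntegral.intervalIntegrable_of_integral_ne_zero (by rw [hk_int]; positivity)).1
  have hk0 : 0 ≤ᵐ[volume.restrict (Ioc a t)] k :=
    ae_restrict_of_forall_mem measurableSet_Ioc fun s hs =>
      mul_nonneg (Real.rpow_nonneg (sub_pos.2 hs.1).le _) (Real.rpow_nonneg (sub_nonneg.2 hs.2) _)
  have hw : ContinuousOn (fun s => (s - a) ^ (1 - lam) * x s) (Ioc a t) :=
    ((continuousOn_id.sub continuousOn_const).rpow_const
      fun s hs => Or.inl (sub_pos.2 hs.1).ne').mul hx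
  have hest := abs_integral_mul_sub_le hk hk0 (hw.aestronglyMeasurable measurableSet_Ioc)
    (ae_restrict_of_forall_mem measurableSet_Ioc hwC)
  rw [intervalIntegral.integral_of_le hat.le] at hk_int
  rw [hk_int] at hest
  rw [rlInt_one_sub_eq_setIntegral h1.ne hat.le]
  calc _ = |((∫ s in Ioc a t, k s * ((s - a) ^ (1 - lam) * x s))
          - Real.Gamma lam * Real.Gamma (1 - lam) * C) / Real.Gamma (1 - lam)| := by
        congr 1
        field_simp
        ring
    _ = _ := by rw [abs_div, abs_of_pos hΓ']
    _ ≤ η * (Real.Gamma lam * Real.Gamma (1 - lam)) / Real.Gamma (1 - lam) := by gcongr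
    _ = η * Real.Gamma lam := by field_simp

/-- if `x : (a,b] → ℝ` is continuous and `(t−a)^(1−λ)·x(t) → C` as
`t → a⁺`, then the Riemann–Liouville integral of order `1−λ` of `x` tends to
`C·Γ(λ)` as `t → a⁺`. -/
theorem statement5 (lam a b C : ℝ) (hlam0 : 0 < lam) (hlam1 : lam < 1) (hab : a < b)
    (x : ℝ → ℝ) (hx : ContinuousOn x (Set.Ioc a b))
    (hlim : Tendsto (fun t => (t - a) ^ (1 - lam) * x t) (𝓝[>] a) (𝓝 C)) :
    Tendsto (fun t => rlInt a (1 - lam) x t) (𝓝[>] a) (𝓝 (C * Real.Gamma lam)) := by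
  have hΓ : 0 < Real.Gamma lam := Real.Gamma_pos_of_pos hlam0
  rw [Metric.tendsto_nhds]
  intro ε hε
  obtain ⟨u, hau, hu⟩ := mem_nhdsGT_iff_exists_Ioo_subset.1
    (Metric.tendsto_nhds.1 hlim (ε / (2 * Real.Gamma lam)) (by positivity))
  filter_upwards [Ioo_mem_nhdsGT (lt_min hau hab)] with t ht
  have hwC : ∀ s ∈ Ioc a t, |(s - a) ^ (1 - lam) * x s - C| ≤ ε / (2 * Real.Gamma lam) :=
    fun s hs => (hu ⟨hs.1, hs.2.trans_lt (ht.2.trans_le (min_le_left _ _))⟩).le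
  calc dist (rlInt a (1 - lam) x t) (C * Real.Gamma lam)
      ≤ ε / (2 * Real.Gamma lam) * Real.Gamma lam :=
        abs_rlInt_one_sub_sub_le hlam0 hlam1 ht.1
          (hx.mono (Ioc_subset_Ioc_right (ht.2.trans_le (min_le_right _ _)).le)) hwC
    _ < ε := by field_simp; linarith
end

section
/- Let 0 < μ < 1, 0 ≤ ν ≤ 1, λ = μ + ν − μν, a < b, C ∈ ℝ, L > 0, and let G : (a,b] × ℝ → ℝ satisfy: (i) for every function y : (a,b] → ℝ for which t ↦ (t−a)^{1−λ} y(t) extends continuously to [a,b], the function t ↦ (t−a)^{1−λ} G(t, y(t)) extends continuously to [a,b]; (ii) |G(t,u) − G(t,v)| ≤ L|u−v| for all t ∈ (a,b] and u, v ∈ ℝ. Then there exists exactly one function x : (a,b] → ℝ such that t ↦ (t−a)^{1−λ} x(t) extends continuously to [a,b] and x(t) = C (t−a)^{λ−1} + (1/Γ(μ)) ∫_a^t (t−s)^{μ−1} G(s, x(s)) ds for all t ∈ (a,b]; equivalently, the weighted Cauchy problem {}_aD^{μ,ν}_t x = G(t,x), lim_{t→a⁺}(t−a)^{1−λ} x(t)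 = C has a unique solution in the weighted space. -/
open MeasureTheory Set Filter Topology

/-- `f` defined on `(a,b]` extends continuously to `[a,b]`. -/
def ExtendsCont (f : ℝ → ℝ) (a b : ℝ) : Prop :=
  ∃ g : ℝ → ℝ, ContinuousOn g (Set.Icc a b) ∧ ∀ t ∈ Set.Ioc a b, g t = f t

/-!
Write `x t = (t - a) ^ (lam - 1) * φ t` with `φ` continuous on `[a, b]`. The substitution
`s = a + u (t - a)` turns the integral equation into the fixed-point equation
`φ t = C + (t - a) ^ μ / Γ(μ) * ∫₀¹ (1 - u) ^ (μ - 1) u ^ (lam - 1) ψ_φ (a + u (t - a)) du`, where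
`ψ_φ` is the continuous extension of `(s - a) ^ (1 - lam) * G(s, x s)`; by the Lipschitz condition,
`|ψ_φ - ψ_φ'| ≤ L |φ - φ'|` pointwise. Since
`r ^ μ ∫₀¹ (1 - u) ^ (μ - 1) u ^ (lam - 1) exp (-K r (1 - u)) du = O(K ^ (-μ))` uniformly in
`r ≥ 0`, the right-hand side is a contraction for the Bielecki norm `sup_t exp (-K (t - a)) |φ t|`
when `K` is large, and Banach's fixed point theorem gives existence and uniqueness.
-/

open scoped NNReal

theorem ContinuousMap.exists_unique_fixedPoint_of_weighted_contraction
    {α : Type*} [TopologicalSpace α] [CompactSpace α] (w : C(α, ℝ)) (hw : ∀ x, 0 < w x)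
    {q : ℝ≥0} (hq : q < 1) (T : C(α, ℝ) → C(α, ℝ))
    (hT : ∀ f g D, (∀ x, |f x - g x| ≤ D * w x) → ∀ x, |T f x - T g x| ≤ q * D * w x) :
    ∃! f, T f = f := by
  let winv : C(α, ℝ) := ⟨fun x => (w x)⁻¹, w.continuous.inv₀ fun x => (hw x).ne'⟩
  have hmul_winv : ∀ f : C(α, ℝ), f * winv * w = f := fun f => by
    ext x; simp [winv, (hw x).ne']
  -- `g ↦ g * w` conjugates `T` to a contraction for the sup metric.
  let S : C(α, ℝ) → C(α, ℝ) := fun g => T (g * w) * winv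
  have hS : ContractingWith q S := by
    refine ⟨hq, LipschitzWith.of_dist_le_mul fun g h => ?_⟩
    refine (ContinuousMap.dist_le (by positivity)).2 fun x => ?_
    have hgh : ∀ y, |(g * w) y - (h * w) y| ≤ dist g h * w y := fun y => by
      rw [ContinuousMap.mul_apply, ContinuousMap.mul_apply, ← sub_mul, abs_mul,
        abs_of_pos (hw y), ← Real.dist_eq]
      exact mul_le_mul_of_nonneg_right (ContinuousMap.dist_apply_le_dist (f := g) (g := h) y)
        (hw y).le
    have hx := hT _ _ _ hgh x
    rw [Real.dist_eq]
    simp only [S, winv, ContinuousMap.mul_apply, ContinuousMap.coe_mk, ← sub_mul, abs_mul,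
      abs_inv, abs_of_pos (hw x)]
    rwa [← le_div_iff₀ (inv_pos.2 (hw x)), div_inv_eq_mul]
  refine ⟨ContractingWith.fixedPoint S hS * w, ?_, fun f hf => ?_⟩
  · have hfix : T (ContractingWith.fixedPoint S hS * w) * winv = _ := hS.fixedPoint_isFixedPt
    change T _ = _
    rw [← hmul_winv (T _), hfix]
  · have hfix : S (f * winv) = f * winv := by simp only [S, hmul_winv, hf]
    rw [← hS.fixedPoint_unique hfix, hmul_winv]

lemma intervalIntegrable_one_sub_rpow_mul_rpow {p q : ℝ} (hp : -1 < p) (hq : -1 < q) :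
    IntervalIntegrable (fun u : ℝ => (1 - u) ^ p * u ^ q) volume 0 1 := by
  have h₁ : IntervalIntegrable (fun u : ℝ => (1 - u) ^ p * u ^ q) volume 0 (1 / 2) := by
    refine (intervalIntegral.intervalIntegrable_rpow' hq).continuousOn_mul
      (ContinuousOn.rpow_const (by fun_prop) fun u hu => Or.inl ?_)
    rw [uIcc_of_le (by norm_num)] at hu
    linarith [hu.2]
  have h₂ : IntervalIntegrable (fun u : ℝ => (1 - u) ^ p * u ^ q) volume (1 / 2) 1 := by
    have h := (intervalIntegral.intervalIntegrable_rpow' (a := 1 / 2) (b := 0) hp).comp_sub_left 1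
    norm_num at h
    refine h.mul_continuousOn (ContinuousOn.rpow_const (by fun_prop) fun u hu => Or.inl ?_)
    rw [uIcc_of_le (by norm_num)] at hu
    linarith [hu.1]
  exact h₁.trans h₂

lemma intervalIntegrable_one_sub_rpow_mul_rpow_mul {p q c d : ℝ} (hp : -1 < p) (hq : -1 < q)
    (hc : c ∈ Icc (0:ℝ) 1) (hd : d ∈ Icc (0:ℝ) 1) {g : ℝ → ℝ} (hg : ContinuousOn g (Icc 0 1)) :
    IntervalIntegrable (fun u : ℝ => (1 - u) ^ p * u ^ q * g u) volume c d := by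
  rw [← uIcc_of_le zero_le_one] at hc hd hg
  exact ((intervalIntegrable_one_sub_rpow_mul_rpow hp hq).mul_continuousOn hg).mono_set
    (uIcc_subset_uIcc hc hd)

lemma integral_rpow_sub_mul_rpow_sub_mul {μ lam a t : ℝ} (ht : a < t) (ψ : ℝ → ℝ) :
    ∫ s in a..t, (t - s) ^ (μ - 1) * ((s - a) ^ (lam - 1) * ψ s) =
      (t - a) ^ (μ + lam - 1) *
        ∫ u in (0:ℝ)..1, (1 - u) ^ (μ - 1) * u ^ (lam - 1) * ψ (a + u * (t - a)) := by
  set r := t - a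
  have hr : 0 < r := sub_pos.2 ht
  have hsubst := intervalIntegral.integral_comp_mul_add (a := 0) (b := 1)
    (fun s => (t - s) ^ (μ - 1) * ((s - a) ^ (lam - 1) * ψ s)) hr.ne' a
  simp only [mul_zero, zero_add, mul_one, show r + a = t by ring, smul_eq_mul] at hsubst
  have hpt : ∀ u ∈ uIcc (0:ℝ) 1,
      (t - (r * u + a)) ^ (μ - 1) * ((r * u + a - a) ^ (lam - 1) * ψ (r * u + a)) =
        r ^ (μ + lam - 2) * ((1 - u) ^ (μ - 1) * u ^ (lam - 1) * ψ (a + u * r)) := by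
    intro u hu
    rw [uIcc_of_le zero_le_one] at hu
    rw [show t - (r * u + a) = r * (1 - u) by ring, show r * u + a - a = r * u by ring,
      Real.mul_rpow hr.le (by linarith [hu.2]), Real.mul_rpow hr.le hu.1,
      show μ + lam - 2 = (μ - 1) + (lam - 1) by ring, Real.rpow_add hr,
      show a + u * r = r * u + a by ring]
    ring
  rw [intervalIntegral.integral_congr hpt, intervalIntegral.integral_const_mul] at hsubst
  rw [eq_inv_mul_iff_mul_eq₀ hr.ne'] at hsubst
  rw [← hsubst, ← mul_assoc, show μ + lam - 1 = 1 + (μ + lam - 2) by ring,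
    Real.rpow_add hr, Real.rpow_one]

lemma rpow_mul_exp_neg_le_one {x m : ℝ} (hx : 0 ≤ x) (hm0 : 0 ≤ m) (hm1 : m ≤ 1) :
    x ^ m * Real.exp (-x) ≤ 1 := by
  have hpow : x ^ m ≤ Real.exp x := by
    refine le_trans ?_ (Real.add_one_le_exp x)
    rcases le_total x 1 with h | h
    · linarith [Real.rpow_le_one hx h hm0]
    · calc x ^ m ≤ x ^ (1:ℝ) := Real.rpow_le_rpow_of_exponent_le h hm1
        _ ≤ x + 1 := by rw [Real.rpow_one]; linarith
  calc x ^ m * Real.exp (-x) ≤ Real.exp x * Real.exp (-x) := by gcongr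
    _ = 1 := by rw [← Real.exp_add, add_neg_cancel, Real.exp_zero]

lemma integral_rpow_mul_exp_neg_mul_le_Gamma {μ κ c : ℝ} (hμ : 0 < μ) (hκ : 0 < κ)
    (hc : 0 ≤ c) :
    ∫ v in (0:ℝ)..c, v ^ (μ - 1) * Real.exp (-(κ * v)) ≤ Real.Gamma μ / κ ^ μ := by
  have hint : IntegrableOn (fun v : ℝ => v ^ (μ - 1) * Real.exp (-(κ * v))) (Ioi 0) := by
    simpa [Real.rpow_one] using
      integrableOn_rpow_mul_exp_neg_mul_rpow (p := 1) (by linarith) one_pos hκ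
  rw [intervalIntegral.integral_of_le hc]
  calc ∫ v in Ioc 0 c, v ^ (μ - 1) * Real.exp (-(κ * v))
      ≤ ∫ v in Ioi 0, v ^ (μ - 1) * Real.exp (-(κ * v)) :=
        setIntegral_mono_set hint
          (ae_restrict_of_forall_mem measurableSet_Ioi fun v hv => by
            have : (0:ℝ) < v := hv
            positivity)
          Ioc_subset_Ioi_self.eventuallyLE
    _ = Real.Gamma μ / κ ^ μ := by
        rw [Real.integral_rpow_mul_exp_neg_mul_Ioi hμ hκ, one_div, Real.inv_rpow hκ.le]
        ring

lemma rpow_le_two_of_half_le {x p : ℝ} (hx : 1 / 2 ≤ x) (hp1 : -1 ≤ p) (hp0 : p ≤ 0) :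
    x ^ p ≤ 2 :=
  calc x ^ p ≤ (1 / 2) ^ p := Real.rpow_le_rpow_of_nonpos (by norm_num) hx hp0
    _ ≤ (1 / 2) ^ (-1 : ℝ) := Real.rpow_le_rpow_of_exponent_ge (by norm_num) (by norm_num) hp1
    _ = 2 := by norm_num

lemma integral_kernel_mul_exp_zero_half_le {μ lam κ : ℝ} (hμ0 : 0 < μ) (hμ1 : μ ≤ 1)
    (hl0 : 0 < lam) (hκ : 0 ≤ κ) :
    ∫ u in (0:ℝ)..1 / 2, (1 - u) ^ (μ - 1) * u ^ (lam - 1) * Real.exp (-(κ * (1 - u))) ≤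
      2 / lam * Real.exp (-(κ / 2)) := by
  have hf := intervalIntegrable_one_sub_rpow_mul_rpow_mul (p := μ - 1) (q := lam - 1)
    (by linarith) (by linarith) (c := 0) (d := 1 / 2) (by norm_num) (by norm_num)
    (g := fun u => Real.exp (-(κ * (1 - u)))) (by fun_prop)
  have hg : IntervalIntegrable (fun u : ℝ => 2 * Real.exp (-(κ / 2)) * u ^ (lam - 1))
      volume 0 (1 / 2) :=
    (intervalIntegral.intervalIntegrable_rpow' (by linarith)).const_mul _
  calc _ ≤ ∫ u in (0:ℝ)..1 / 2, 2 * Real.exp (-(κ / 2)) * u ^ (lam - 1) := by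
        refine intervalIntegral.integral_mono_on (by norm_num) hf hg fun u hu => ?_
        have hk : (1 - u) ^ (μ - 1) ≤ 2 :=
          rpow_le_two_of_half_le (by linarith [hu.2]) (by linarith) (by linarith)
        have he : Real.exp (-(κ * (1 - u))) ≤ Real.exp (-(κ / 2)) :=
          Real.exp_le_exp.2 (by nlinarith [hu.2])
        have hu' : 0 ≤ u ^ (lam - 1) := Real.rpow_nonneg hu.1 _
        calc (1 - u) ^ (μ - 1) * u ^ (lam - 1) * Real.exp (-(κ * (1 - u)))
            ≤ 2 * u ^ (lam - 1) * Real.exp (-(κ / 2)) := by gcongr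
          _ = _ := by ring
    _ = 2 * Real.exp (-(κ / 2)) * ((1 / 2) ^ lam / lam) := by
        rw [intervalIntegral.integral_const_mul, integral_rpow (Or.inl (by linarith))]
        simp [Real.zero_rpow hl0.ne']
    _ ≤ 2 / lam * Real.exp (-(κ / 2)) := by
        have : (1 / 2 : ℝ) ^ lam ≤ 1 := Real.rpow_le_one (by norm_num) (by norm_num) hl0.le
        calc _ = 2 / lam * Real.exp (-(κ / 2)) * (1 / 2) ^ lam := by ring
          _ ≤ 2 / lam * Real.exp (-(κ / 2)) * 1 := by gcongr
          _ = _ := mul_one _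

lemma integral_kernel_mul_exp_half_one_le {μ lam κ : ℝ} (hμ0 : 0 < μ) (hl0 : 0 < lam)
    (hl1 : lam ≤ 1) (hκ : 0 < κ) :
    ∫ u in (1 / 2 : ℝ)..1, (1 - u) ^ (μ - 1) * u ^ (lam - 1) * Real.exp (-(κ * (1 - u))) ≤
      2 * Real.Gamma μ / κ ^ μ := by
  set h : ℝ → ℝ := fun v => v ^ (μ - 1) * Real.exp (-(κ * v))
  have hf := intervalIntegrable_one_sub_rpow_mul_rpow_mul (p := μ - 1) (q := lam - 1)
    (by linarith) (by linarith) (c := 1 / 2) (d := 1) (by norm_num) (by norm_num)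
    (g := fun u => Real.exp (-(κ * (1 - u)))) (by fun_prop)
  have hh : IntervalIntegrable h volume 0 (1 / 2) :=
    (intervalIntegral.intervalIntegrable_rpow' (by linarith)).mul_continuousOn (by fun_prop)
  have hg : IntervalIntegrable (fun u : ℝ => 2 * h (1 - u)) volume (1 / 2) 1 := by
    convert ((hh.comp_sub_left 1).const_mul 2).symm using 1 <;> norm_num
  calc _ ≤ ∫ u in (1 / 2 : ℝ)..1, 2 * h (1 - u) := by
        refine intervalIntegral.integral_mono_on (by norm_num) hf hg fun u hu => ?_
        have hk : u ^ (lam - 1) ≤ 2 := rpow_le_two_of_half_le hu.1 (by linarith) (by linarith)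
        have h1u : 0 ≤ (1 - u) ^ (μ - 1) := Real.rpow_nonneg (by linarith [hu.2]) _
        calc (1 - u) ^ (μ - 1) * u ^ (lam - 1) * Real.exp (-(κ * (1 - u)))
            ≤ (1 - u) ^ (μ - 1) * 2 * Real.exp (-(κ * (1 - u))) := by gcongr
          _ = _ := by simp only [h]; ring
    _ = 2 * ∫ v in (0:ℝ)..1 / 2, h v := by
        rw [intervalIntegral.integral_const_mul, intervalIntegral.integral_comp_sub_left h 1]
        norm_num
    _ ≤ 2 * (Real.Gamma μ / κ ^ μ) := by
        gcongr
        exact integral_rpow_mul_exp_neg_mul_le_Gamma hμ0 hκ (by norm_num)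
    _ = _ := by ring

lemma rpow_mul_integral_kernel_mul_exp_le {μ lam K r : ℝ} (hμ0 : 0 < μ) (hμ1 : μ ≤ 1)
    (hl0 : 0 < lam) (hl1 : lam ≤ 1) (hK : 0 < K) (hr : 0 ≤ r) :
    r ^ μ * ∫ u in (0:ℝ)..1,
        (1 - u) ^ (μ - 1) * u ^ (lam - 1) * Real.exp (-(K * r * (1 - u))) ≤
      (4 / lam + 2 * Real.Gamma μ) / K ^ μ := by
  rcases hr.eq_or_lt with rfl | hr
  · rw [Real.zero_rpow hμ0.ne', zero_mul]
    positivity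
  have hf : ∀ c ∈ Icc (0:ℝ) 1, ∀ d ∈ Icc (0:ℝ) 1, IntervalIntegrable
      (fun u => (1 - u) ^ (μ - 1) * u ^ (lam - 1) * Real.exp (-(K * r * (1 - u)))) volume c d :=
    fun c hc d hd => intervalIntegrable_one_sub_rpow_mul_rpow_mul (by linarith) (by linarith)
      hc hd (by fun_prop)
  rw [← intervalIntegral.integral_add_adjacent_intervals (b := 1 / 2)
    (hf 0 (by norm_num) _ (by norm_num)) (hf _ (by norm_num) 1 (by norm_num))]
  have h₁ := integral_kernel_mul_exp_zero_half_le hμ0 hμ1 hl0 (by positivity : 0 ≤ K * r)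
  have h₂ := integral_kernel_mul_exp_half_one_le hμ0 hl0 hl1 (by positivity : 0 < K * r)
  have hKμ : 0 < K ^ μ := Real.rpow_pos_of_pos hK μ
  have hexp : r ^ μ * Real.exp (-(K * r / 2)) ≤ 2 / K ^ μ := by
    have h := rpow_mul_exp_neg_le_one (x := K * r / 2) (by positivity) hμ0.le hμ1
    rw [Real.div_rpow (by positivity) (by norm_num), Real.mul_rpow hK.le hr.le] at h
    have h2 : (2 : ℝ) ^ μ ≤ 2 := by
      simpa using Real.rpow_le_rpow_of_exponent_le (by norm_num : (1:ℝ) ≤ 2) hμ1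
    rw [le_div_iff₀ hKμ]
    have h2μ : 0 < (2 : ℝ) ^ μ := by positivity
    rw [div_mul_eq_mul_div, div_le_one h2μ] at h
    nlinarith
  calc r ^ μ * (_ + _)
      ≤ r ^ μ * (2 / lam * Real.exp (-(K * r / 2)) + 2 * Real.Gamma μ / (K * r) ^ μ) := by
        gcongr
    _ = 2 / lam * (r ^ μ * Real.exp (-(K * r / 2))) + 2 * Real.Gamma μ / K ^ μ := by
        rw [Real.mul_rpow hK.le hr.le]
        field_simp
    _ ≤ 2 / lam * (2 / K ^ μ) + 2 * Real.Gamma μ / K ^ μ := by gcongr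
    _ = _ := by ring

lemma continuous_integral_kernel_mul_comp {p q : ℝ} (hp : -1 < p) (hq : -1 < q) {ψ : ℝ → ℝ}
    (hψ : Continuous ψ) {M : ℝ} (hM : ∀ x, |ψ x| ≤ M) (a : ℝ) :
    Continuous fun t => ∫ u in (0:ℝ)..1, (1 - u) ^ p * u ^ q * ψ (a + u * (t - a)) := by
  refine intervalIntegral.continuous_of_dominated_interval
    (bound := fun u => |(1 - u) ^ p * u ^ q| * M) (fun t => ?_)
    (fun t => ae_of_all _ fun u _ => ?_)
    ((intervalIntegrable_one_sub_rpow_mul_rpow hp hq).abs.mul_const M)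
    (ae_of_all _ fun u _ => by fun_prop)
  · exact (intervalIntegrable_one_sub_rpow_mul_rpow_mul hp hq (by simp) (by simp)
      (g := fun u => ψ (a + u * (t - a))) (by fun_prop)).aestronglyMeasurable_restrict_uIoc
  · rw [Real.norm_eq_abs, abs_mul]
    exact mul_le_mul_of_nonneg_left (hM _) (abs_nonneg _)

/-- If `g s = (s - a) ^ (lam - 1) * ψ s`, then `weightedVolterra a μ lam C ψ t` is
`(t - a) ^ (1 - lam) * (C * (t - a) ^ (lam - 1) + rlInt a μ g t)`, written after the substitution
`s = a + u * (t - a)`; see `rpow_mul_eq_volterra_iff`. -/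
noncomputable def weightedVolterra (a μ lam C : ℝ) (ψ : ℝ → ℝ) (t : ℝ) : ℝ :=
  C + (t - a) ^ μ / Real.Gamma μ *
    ∫ u in (0:ℝ)..1, (1 - u) ^ (μ - 1) * u ^ (lam - 1) * ψ (a + u * (t - a))

lemma continuous_weightedVolterra {a μ lam C M : ℝ} (hμ : 0 < μ) (hl : 0 < lam) {ψ : ℝ → ℝ}
    (hψ : Continuous ψ) (hM : ∀ x, |ψ x| ≤ M) :
    Continuous (weightedVolterra a μ lam C ψ) :=
  continuous_const.add <|
    (((Real.continuous_rpow_const hμ.le).comp (continuous_sub_right a)).div_const _).mul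
      (continuous_integral_kernel_mul_comp (by linarith) (by linarith) hψ hM a)

lemma rpow_mul_eq_volterra_iff {a t μ lam C φ : ℝ} (ht : a < t) {g ψ : ℝ → ℝ}
    (hg : ∀ s ∈ Ioc a t, g s = (s - a) ^ (lam - 1) * ψ s) :
    (t - a) ^ (lam - 1) * φ =
        C * (t - a) ^ (lam - 1) + 1 / Real.Gamma μ * ∫ s in a..t, (t - s) ^ (μ - 1) * g s ↔
      φ = weightedVolterra a μ lam C ψ t := by
  have hta : 0 < t - a := sub_pos.2 ht
  have hint : ∫ s in a..t, (t - s) ^ (μ - 1) * g s =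
      ∫ s in a..t, (t - s) ^ (μ - 1) * ((s - a) ^ (lam - 1) * ψ s) :=
    intervalIntegral.integral_congr_ae <| ae_of_all _ fun s hs => by
      rw [uIoc_of_le ht.le] at hs
      rw [hg s hs]
  refine Iff.trans (Eq.congr_right ?_) (mul_right_inj' (Real.rpow_pos_of_pos hta (lam - 1)).ne')
  rw [hint, integral_rpow_sub_mul_rpow_sub_mul ht, show μ + lam - 1 = (lam - 1) + μ by ring,
    Real.rpow_add hta, weightedVolterra]
  ring

lemma abs_integral_kernel_mul_sub_le {a t μ lam M K : ℝ} (hμ0 : 0 < μ) (hl0 : 0 < lam)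
    (ht : a < t) {ψ₁ ψ₂ : ℝ → ℝ} (hψ₁ : Continuous ψ₁) (hψ₂ : Continuous ψ₂)
    (hψ : ∀ s ∈ Ioc a t, |ψ₁ s - ψ₂ s| ≤ M * Real.exp (K * (s - a))) :
    |(∫ u in (0:ℝ)..1, (1 - u) ^ (μ - 1) * u ^ (lam - 1) * ψ₁ (a + u * (t - a))) -
        ∫ u in (0:ℝ)..1, (1 - u) ^ (μ - 1) * u ^ (lam - 1) * ψ₂ (a + u * (t - a))| ≤
      M * Real.exp (K * (t - a)) * ∫ u in (0:ℝ)..1,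
        (1 - u) ^ (μ - 1) * u ^ (lam - 1) * Real.exp (-(K * (t - a) * (1 - u))) := by
  set r := t - a
  have hint : ∀ ψ : ℝ → ℝ, Continuous ψ → IntervalIntegrable
      (fun u => (1 - u) ^ (μ - 1) * u ^ (lam - 1) * ψ (a + u * r)) volume 0 1 :=
    fun ψ hψ => intervalIntegrable_one_sub_rpow_mul_rpow_mul (by linarith) (by linarith)
      (by simp) (by simp) (by fun_prop)
  have hbint : IntervalIntegrable (fun u => (1 - u) ^ (μ - 1) * u ^ (lam - 1) *
      (M * Real.exp (K * (u * r)))) volume 0 1 :=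
    intervalIntegrable_one_sub_rpow_mul_rpow_mul (by linarith) (by linarith) (by simp) (by simp)
      (by fun_prop)
  have hexp : ∫ u in (0:ℝ)..1, (1 - u) ^ (μ - 1) * u ^ (lam - 1) * (M * Real.exp (K * (u * r))) =
      M * Real.exp (K * r) * ∫ u in (0:ℝ)..1,
        (1 - u) ^ (μ - 1) * u ^ (lam - 1) * Real.exp (-(K * r * (1 - u))) := by
    rw [← intervalIntegral.integral_const_mul]
    refine intervalIntegral.integral_congr fun u _ => ?_
    rw [show K * (u * r) = K * r + -(K * r * (1 - u)) by ring, Real.exp_add]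
    ring
  rw [← hexp, ← intervalIntegral.integral_sub (hint ψ₁ hψ₁) (hint ψ₂ hψ₂), ← Real.norm_eq_abs]
  refine intervalIntegral.norm_integral_le_of_norm_le zero_le_one
    (ae_of_all _ fun u hu => ?_) hbint
  have hs : a + u * r ∈ Ioc a t := ⟨by nlinarith [hu.1, sub_pos.2 ht], by nlinarith [hu.2]⟩
  have hk : 0 ≤ (1 - u) ^ (μ - 1) * u ^ (lam - 1) :=
    mul_nonneg (Real.rpow_nonneg (by linarith [hu.2]) _) (Real.rpow_nonneg hu.1.le _)
  rw [Real.norm_eq_abs, ← mul_sub, abs_mul, abs_of_nonneg hk]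
  have h := hψ _ hs
  rw [add_sub_cancel_left] at h
  exact mul_le_mul_of_nonneg_left h hk

lemma abs_weightedVolterra_sub_le {a t μ lam C M K : ℝ} (hμ0 : 0 < μ) (hμ1 : μ ≤ 1)
    (hl0 : 0 < lam) (hl1 : lam ≤ 1) (hK : 0 < K) (hM : 0 ≤ M) (ht : a ≤ t) {ψ₁ ψ₂ : ℝ → ℝ}
    (hψ₁ : Continuous ψ₁) (hψ₂ : Continuous ψ₂)
    (hψ : ∀ s ∈ Ioc a t, |ψ₁ s - ψ₂ s| ≤ M * Real.exp (K * (s - a))) :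
    |weightedVolterra a μ lam C ψ₁ t - weightedVolterra a μ lam C ψ₂ t| ≤
      M / Real.Gamma μ * ((4 / lam + 2 * Real.Gamma μ) / K ^ μ) * Real.exp (K * (t - a)) := by
  rcases ht.eq_or_lt with rfl | ht
  · simp only [weightedVolterra, sub_self, Real.zero_rpow hμ0.ne', zero_div, zero_mul,
      abs_zero]
    positivity
  have hr : 0 < t - a := sub_pos.2 ht
  have hΓ : 0 < Real.Gamma μ := Real.Gamma_pos_of_pos hμ0
  rw [weightedVolterra, weightedVolterra, add_sub_add_left_eq_sub, ← mul_sub, abs_mul,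
    abs_of_nonneg (by positivity)]
  calc (t - a) ^ μ / Real.Gamma μ * |_|
      ≤ (t - a) ^ μ / Real.Gamma μ * (M * Real.exp (K * (t - a)) * ∫ u in (0:ℝ)..1,
          (1 - u) ^ (μ - 1) * u ^ (lam - 1) * Real.exp (-(K * (t - a) * (1 - u)))) := by
        gcongr
        exact abs_integral_kernel_mul_sub_le hμ0 hl0 ht hψ₁ hψ₂ hψ
    _ = M / Real.Gamma μ * ((t - a) ^ μ * ∫ u in (0:ℝ)..1,
          (1 - u) ^ (μ - 1) * u ^ (lam - 1) * Real.exp (-(K * (t - a) * (1 - u)))) *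
          Real.exp (K * (t - a)) := by ring
    _ ≤ _ := by
        gcongr
        exact rpow_mul_integral_kernel_mul_exp_le hμ0 hμ1 hl0 hl1 hK hr.le

theorem exists_unique_fixedPoint_weightedVolterra {a b μ lam C L : ℝ} (hab : a ≤ b)
    (hμ0 : 0 < μ) (hμ1 : μ ≤ 1) (hl0 : 0 < lam) (hl1 : lam ≤ 1) (hL : 0 ≤ L)
    (Ψ : C(Icc a b, ℝ) → C(Icc a b, ℝ))
    (hΨ : ∀ f g (s : Icc a b), a < s → |Ψ f s - Ψ g s| ≤ L * |f s - g s|) :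
    ∃! f : C(Icc a b, ℝ), ∀ t : Icc a b,
      weightedVolterra a μ lam C (IccExtend hab (Ψ f)) t = f t := by
  have hΓ : 0 < Real.Gamma μ := Real.Gamma_pos_of_pos hμ0
  set c := 4 / lam + 2 * Real.Gamma μ
  set K := (2 * L * c / Real.Gamma μ + 1) ^ μ⁻¹
  have hK : 0 < K := by positivity
  have hsmall : L / Real.Gamma μ * (c / K ^ μ) ≤ 1 / 2 := by
    rw [Real.rpow_inv_rpow (by positivity) hμ0.ne', div_mul_div_comm,
      div_le_iff₀ (by positivity)]
    field_simp
    nlinarith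
  have hcont : ∀ f : C(Icc a b, ℝ), Continuous (IccExtend hab f) :=
    fun f => f.continuous.Icc_extend'
  let T : C(Icc a b, ℝ) → C(Icc a b, ℝ) := fun f =>
    ⟨fun t => weightedVolterra a μ lam C (IccExtend hab (Ψ f)) t,
      (continuous_weightedVolterra hμ0 hl0 (hcont _)
        fun x => (Ψ f).norm_coe_le_norm _).comp continuous_subtype_val⟩
  have hcontr : ∀ (f g : C(Icc a b, ℝ)) (D : ℝ),
      (∀ s, |f s - g s| ≤ D * Real.exp (K * (s - a))) →
        ∀ t, |T f t - T g t| ≤ (1 / 2 : ℝ≥0) * D * Real.exp (K * (t - a)) := by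
    intro f g D hfg t
    have hD : 0 ≤ D := by
      have h := (abs_nonneg _).trans (hfg ⟨a, left_mem_Icc.2 hab⟩)
      simpa using h
    calc |T f t - T g t|
        ≤ L * D / Real.Gamma μ * (c / K ^ μ) * Real.exp (K * (t - a)) :=
          abs_weightedVolterra_sub_le hμ0 hμ1 hl0 hl1 hK (by positivity) t.2.1 (hcont _)
            (hcont _) fun s hs => by
              have hs' : s ∈ Icc a b := ⟨hs.1.le, hs.2.trans t.2.2⟩
              rw [IccExtend_of_mem _ _ hs', IccExtend_of_mem _ _ hs', mul_assoc]
              exact (hΨ f g ⟨s, hs'⟩ hs.1).trans (by gcongr; exact hfg ⟨s, hs'⟩)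
      _ = D * (L / Real.Gamma μ * (c / K ^ μ)) * Real.exp (K * (t - a)) := by ring
      _ ≤ D * (1 / 2) * Real.exp (K * (t - a)) := by gcongr
      _ = _ := by push_cast; ring
  obtain ⟨f, hf, huniq⟩ := ContinuousMap.exists_unique_fixedPoint_of_weighted_contraction
    ⟨fun t : Icc a b => Real.exp (K * (t - a)), by fun_prop⟩ (fun t => Real.exp_pos _)
    (by norm_num) T hcontr
  exact ⟨f, fun t => congrArg (· t) hf, fun g hg => huniq g (ContinuousMap.ext hg)⟩

lemma rpow_mul_rpow_mul_cancel {x p q : ℝ} (hx : 0 < x) (hpq : p + q = 0) (y : ℝ) :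
    x ^ p * (x ^ q * y) = y := by
  rw [← mul_assoc, ← Real.rpow_add hx, hpq, Real.rpow_zero, one_mul]

/-- `Ψ` is the superposition operator `y ↦ G(·, y ·)` read in the weighted coordinates
`f = (· - a) ^ (1 - lam) * y` on `(a, b]`. -/
def IsWeightedSuperposition {a b : ℝ} (lam : ℝ) (G : ℝ → ℝ → ℝ)
    (Ψ : C(Icc a b, ℝ) → C(Icc a b, ℝ)) : Prop :=
  ∀ f (s : Icc a b), a < s → Ψ f s = (s - a) ^ (1 - lam) * G s ((s - a) ^ (lam - 1) * f s)

lemma exists_isWeightedSuperposition {a b lam : ℝ} (hab : a ≤ b) {G : ℝ → ℝ → ℝ}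
    (hG : ∀ y : ℝ → ℝ, ExtendsCont (fun t => (t - a) ^ (1 - lam) * y t) a b →
      ExtendsCont (fun t => (t - a) ^ (1 - lam) * G t (y t)) a b) :
    ∃ Ψ : C(Icc a b, ℝ) → C(Icc a b, ℝ), IsWeightedSuperposition lam G Ψ := by
  have h : ∀ f : C(Icc a b, ℝ), ExtendsCont
      (fun t => (t - a) ^ (1 - lam) * G t ((t - a) ^ (lam - 1) * IccExtend hab f t)) a b :=
    fun f => hG _ ⟨IccExtend hab f, f.continuous.Icc_extend'.continuousOn,
      fun t ht => (rpow_mul_rpow_mul_cancel (sub_pos.2 ht.1) (by ring) _).symm⟩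
  choose ψ hψc hψ using h
  refine ⟨fun f => ⟨(Icc a b).domRestrict (ψ f), (hψc f).domRestrict⟩, fun f s hs => ?_⟩
  exact (hψ f s ⟨hs, s.2.2⟩).trans (by simp only [IccExtend_val])

lemma IsWeightedSuperposition.abs_sub_le {a b lam L : ℝ} {G : ℝ → ℝ → ℝ}
    {Ψ : C(Icc a b, ℝ) → C(Icc a b, ℝ)}
    (hΨ : IsWeightedSuperposition lam G Ψ)
    (hG : ∀ t ∈ Ioc a b, ∀ u v : ℝ, |G t u - G t v| ≤ L * |u - v|)
    (f g : C(Icc a b, ℝ)) (s : Icc a b) (hs : a < s) :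
    |Ψ f s - Ψ g s| ≤ L * |f s - g s| := by
  have hsa : 0 < (s : ℝ) - a := sub_pos.2 hs
  rw [hΨ f s hs, hΨ g s hs, ← mul_sub, abs_mul, abs_of_pos (Real.rpow_pos_of_pos hsa _)]
  calc _ ≤ (s - a) ^ (1 - lam) *
        (L * |(s - a) ^ (lam - 1) * f s - (s - a) ^ (lam - 1) * g s|) := by
        gcongr
        exact hG s ⟨hs, s.2.2⟩ _ _
    _ = L * |f s - g s| := by
        rw [← mul_sub, abs_mul, abs_of_pos (Real.rpow_pos_of_pos hsa _), mul_left_comm,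
          rpow_mul_rpow_mul_cancel hsa (by ring)]

lemma IsWeightedSuperposition.volterra_iff {a b μ lam C : ℝ} (hab : a ≤ b) {G : ℝ → ℝ → ℝ}
    {Ψ : C(Icc a b, ℝ) → C(Icc a b, ℝ)}
    (hΨ : IsWeightedSuperposition lam G Ψ)
    (f : C(Icc a b, ℝ)) {y : ℝ → ℝ}
    (hy : ∀ s ∈ Ioc a b, y s = (s - a) ^ (lam - 1) * IccExtend hab f s) {t : ℝ}
    (ht : t ∈ Ioc a b) :
    y t = C * (t - a) ^ (lam - 1) +
        1 / Real.Gamma μ * ∫ s in a..t, (t - s) ^ (μ - 1) * G s (y s) ↔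
      IccExtend hab f t = weightedVolterra a μ lam C (IccExtend hab (Ψ f)) t := by
  rw [hy t ht]
  refine rpow_mul_eq_volterra_iff ht.1 fun s hs => ?_
  have hs' : s ∈ Icc a b := ⟨hs.1.le, hs.2.trans ht.2⟩
  rw [IccExtend_of_mem _ _ hs', hΨ f ⟨s, hs'⟩ hs.1, hy s ⟨hs.1, hs'.2⟩,
    IccExtend_of_mem _ _ hs', rpow_mul_rpow_mul_cancel (sub_pos.2 hs.1) (by ring)]

lemma IsWeightedSuperposition.weightedVolterra_eq {a b μ lam C : ℝ} (hab : a < b) (hμ : 0 < μ)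
    (hl : 0 < lam) {G : ℝ → ℝ → ℝ} {Ψ : C(Icc a b, ℝ) → C(Icc a b, ℝ)}
    (hΨ : IsWeightedSuperposition lam G Ψ)
    (f : C(Icc a b, ℝ)) {y : ℝ → ℝ}
    (hy : ∀ s ∈ Ioc a b, y s = (s - a) ^ (lam - 1) * IccExtend hab.le f s)
    (hsol : ∀ t ∈ Ioc a b, y t = C * (t - a) ^ (lam - 1) +
      1 / Real.Gamma μ * ∫ s in a..t, (t - s) ^ (μ - 1) * G s (y s))
    (t : Icc a b) :
    weightedVolterra a μ lam C (IccExtend hab.le (Ψ f)) t = f t := by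
  have h : EqOn (weightedVolterra a μ lam C (IccExtend hab.le (Ψ f))) (IccExtend hab.le f)
      (Icc a b) :=
    EqOn.of_subset_closure
      (fun t ht => ((hΨ.volterra_iff hab.le f hy ht).1 (hsol t ht)).symm)
      (continuous_weightedVolterra hμ hl (Ψ f).continuous.Icc_extend'
        fun x => (Ψ f).norm_coe_le_norm _).continuousOn
      f.continuous.Icc_extend'.continuousOn Ioc_subset_Icc_self (closure_Ioc hab.ne).ge
  rw [h t.2, IccExtend_val]

/-- existence and uniqueness, in the weighted space, of the solution of
the Volterra integral equation (equivalently, of the weighted Cauchy problem for the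
Hilfer fractional derivative) under a Lipschitz condition on `G`. -/
theorem statement7 (μ ν lam a b C L : ℝ) (hμ0 : 0 < μ) (hμ1 : μ < 1)
    (hν0 : 0 ≤ ν) (hν1 : ν ≤ 1) (hlam : lam = μ + ν - μ * ν) (hab : a < b) (hL : 0 < L)
    (G : ℝ → ℝ → ℝ)
    (hGmap : ∀ y : ℝ → ℝ, ExtendsCont (fun t => (t - a) ^ (1 - lam) * y t) a b →
      ExtendsCont (fun t => (t - a) ^ (1 - lam) * G t (y t)) a b)
    (hGlip : ∀ t ∈ Set.Ioc a b, ∀ u v : ℝ, |G t u - G t v| ≤ L * |u - v|) :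
    ∃ x : ℝ → ℝ,
      (ExtendsCont (fun t => (t - a) ^ (1 - lam) * x t) a b ∧
        ∀ t ∈ Set.Ioc a b,
          x t = C * (t - a) ^ (lam - 1) +
            (1 / Real.Gamma μ) * ∫ s in a..t, (t - s) ^ (μ - 1) * G s (x s)) ∧
      ∀ y : ℝ → ℝ,
        (ExtendsCont (fun t => (t - a) ^ (1 - lam) * y t) a b ∧
          ∀ t ∈ Set.Ioc a b,
            y t = C * (t - a) ^ (lam - 1) +
              (1 / Real.Gamma μ) * ∫ s in a..t, (t - s) ^ (μ - 1) * G s (y s)) →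
        ∀ t ∈ Set.Ioc a b, y t = x t := by
  have hlam0 : 0 < lam := by rw [hlam]; nlinarith
  have hlam1 : lam ≤ 1 := by rw [hlam]; nlinarith
  obtain ⟨Ψ, hΨ⟩ := exists_isWeightedSuperposition hab.le hGmap
  obtain ⟨φ, hφ, hφ_unique⟩ := exists_unique_fixedPoint_weightedVolterra (C := C) hab.le hμ0
    hμ1.le hlam0 hlam1 hL.le Ψ (hΨ.abs_sub_le hGlip)
  refine ⟨fun t => (t - a) ^ (lam - 1) * IccExtend hab.le φ t,
    ⟨⟨IccExtend hab.le φ, φ.continuous.Icc_extend'.continuousOn, fun t ht => ?_⟩, fun t ht => ?_⟩,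
    ?_⟩
  · exact (rpow_mul_rpow_mul_cancel (sub_pos.2 ht.1) (by ring) _).symm
  · refine (hΨ.volterra_iff hab.le φ (fun _ _ => rfl) ht).2 ?_
    rw [IccExtend_of_mem _ _ (Ioc_subset_Icc_self ht)]
    exact (hφ _).symm
  rintro y ⟨⟨w, hwc, hw⟩, hy⟩
  set φy : C(Icc a b, ℝ) := ⟨(Icc a b).domRestrict w, hwc.domRestrict⟩
  have hyφ : ∀ s ∈ Ioc a b, y s = (s - a) ^ (lam - 1) * IccExtend hab.le φy s := fun s hs => by
    rw [IccExtend_of_mem _ _ (Ioc_subset_Icc_self hs)]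
    exact (rpow_mul_rpow_mul_cancel (sub_pos.2 hs.1) (by ring) _).symm.trans
      (congrArg _ (hw s hs).symm)
  have hφy : φy = φ := hφ_unique φy (hΨ.weightedVolterra_eq hab hμ0 hlam0 φy hyφ hy)
  intro t ht
  rw [hyφ t ht, hφy]
end

section
/- Let 0 < μ < 1, 0 < λ ≤ 1, and let p satisfy 1−μ < p < λ. Then for all real t₀ < t: ∫_{t₀}^{t} (t−s)^{μ−1} (s−t₀)^{λ−1} ds ≤ ((1−p)/(λ−p))^{1−p} · (p/(p+μ−1))^{p} · (t−t₀)^{μ+λ−1}. -/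
open MeasureTheory Set

section Holder

variable {α : Type*} [MeasurableSpace α] {μ : Measure α} {f g : α → ℝ}

theorem memLp_ofReal_of_integrable_rpow {q : ℝ} (hq : 0 < q) (hf0 : 0 ≤ᵐ[μ] f)
    (hfm : AEStronglyMeasurable f μ) (hf : Integrable (fun x => f x ^ q) μ) :
    MemLp f (ENNReal.ofReal q) μ := by
  refine (integrable_norm_rpow_iff hfm (by simpa using hq) ENNReal.ofReal_ne_top).mp ?_
  refine hf.congr ?_
  filter_upwards [hf0] with x hx
  rw [ENNReal.toReal_ofReal hq.le, Real.norm_of_nonneg hx]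

theorem integral_mul_le_integral_rpow_inv_mul {p : ℝ} (hp0 : 0 < p) (hp1 : p < 1)
    (hf0 : 0 ≤ᵐ[μ] f) (hg0 : 0 ≤ᵐ[μ] g)
    (hfm : AEStronglyMeasurable f μ) (hgm : AEStronglyMeasurable g μ)
    (hf : Integrable (fun x => f x ^ p⁻¹) μ) (hg : Integrable (fun x => g x ^ (1 - p)⁻¹) μ) :
    ∫ x, f x * g x ∂μ ≤ (∫ x, f x ^ p⁻¹ ∂μ) ^ p * (∫ x, g x ^ (1 - p)⁻¹ ∂μ) ^ (1 - p) := by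
  have h := integral_mul_le_Lp_mul_Lq_of_nonneg (Real.HolderConjugate.inv_one_sub_inv hp0 hp1)
    hf0 hg0 (memLp_ofReal_of_integrable_rpow (by positivity) hf0 hfm hf)
    (memLp_ofReal_of_integrable_rpow (by simpa using hp1) hg0 hgm hg)
  simpa only [one_div, inv_inv] using h

end Holder

section PowerKernel

variable {a b r : ℝ}

theorem integral_Ioc_sub_rpow (hab : a ≤ b) (hr : -1 < r) :
    ∫ s in Ioc a b, (s - a) ^ r = (b - a) ^ (r + 1) / (r + 1) := by
  rw [← intervalIntegral.integral_of_le hab,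
    intervalIntegral.integral_comp_sub_right (fun x => x ^ r), integral_rpow (Or.inl hr),
    sub_self, Real.zero_rpow (by linarith), sub_zero]

theorem integral_Ioc_rpow_sub (hab : a ≤ b) (hr : -1 < r) :
    ∫ s in Ioc a b, (b - s) ^ r = (b - a) ^ (r + 1) / (r + 1) := by
  rw [← intervalIntegral.integral_of_le hab,
    intervalIntegral.integral_comp_sub_left (fun x => x ^ r), integral_rpow (Or.inl hr),
    sub_self, Real.zero_rpow (by linarith), sub_zero]

theorem integrableOn_Ioc_sub_rpow (hab : a ≤ b) (hr : -1 < r) :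
    IntegrableOn (fun s => (s - a) ^ r) (Ioc a b) := by
  rw [← intervalIntegrable_iff_integrableOn_Ioc_of_le hab]
  simpa using (intervalIntegral.intervalIntegrable_rpow' hr (a := 0) (b := b - a)).comp_sub_right a

theorem integrableOn_Ioc_rpow_sub (hab : a ≤ b) (hr : -1 < r) :
    IntegrableOn (fun s => (b - s) ^ r) (Ioc a b) := by
  rw [← intervalIntegrable_iff_integrableOn_Ioc_of_le hab]
  simpa using ((intervalIntegral.intervalIntegrable_rpow' hr (a := 0) (b := b - a)).comp_sub_left b).symm

end PowerKernel

theorem rpow_div_add_one_div_rpow {c r p : ℝ} (hc : 0 ≤ c) (hp : 0 < p) (hrp : 0 < r + p) :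
    (c ^ (r / p + 1) / (r / p + 1)) ^ p = (p / (r + p)) ^ p * c ^ (r + p) := by
  have hexp : r / p + 1 = (r + p) / p := by field_simp
  rw [hexp, div_eq_inv_mul, inv_div, Real.mul_rpow (by positivity) (by positivity), ← Real.rpow_mul hc, div_mul_cancel₀ _ hp.ne']

theorem integral_rpow_sub_mul_sub_rpow_le {a b α β p : ℝ} (hab : a ≤ b) (hp0 : 0 < p) (hp1 : p < 1)
    (hα : 0 < α + p) (hβ : 0 < β + (1 - p)) :
    ∫ s in a..b, (b - s) ^ α * (s - a) ^ β ≤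
      (p / (α + p)) ^ p * ((1 - p) / (β + (1 - p))) ^ (1 - p) * (b - a) ^ (α + β + 1) := by
  have hq0 : 0 < 1 - p := by linarith
  have hα' : -1 < α / p := by rw [lt_div_iff₀ hp0]; linarith
  have hβ' : -1 < β / (1 - p) := by rw [lt_div_iff₀ hq0]; linarith
  have hleft : ∀ s ∈ Ioc a b, 0 ≤ b - s := fun s hs => by linarith [hs.2]
  have hright : ∀ s ∈ Ioc a b, 0 ≤ s - a := fun s hs => by linarith [hs.1]
  have hf : (fun s => ((b - s) ^ α) ^ p⁻¹) =ᵐ[volume.restrict (Ioc a b)] fun s => (b - s) ^ (α / p) := by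
    filter_upwards [ae_restrict_mem measurableSet_Ioc] with s hs
    rw [← Real.rpow_mul (hleft s hs), div_eq_mul_inv]
  have hg : (fun s => ((s - a) ^ β) ^ (1 - p)⁻¹) =ᵐ[volume.restrict (Ioc a b)]
      fun s => (s - a) ^ (β / (1 - p)) := by
    filter_upwards [ae_restrict_mem measurableSet_Ioc] with s hs
    rw [← Real.rpow_mul (hright s hs), div_eq_mul_inv]
  have holder := integral_mul_le_integral_rpow_inv_mul hp0 hp1
    ((ae_restrict_iff' measurableSet_Ioc).mpr (.of_forall fun s hs => by positivity [hleft s hs]))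
    ((ae_restrict_iff' measurableSet_Ioc).mpr (.of_forall fun s hs => by positivity [hright s hs]))
    (by fun_prop : Measurable _).aestronglyMeasurable
    (by fun_prop : Measurable _).aestronglyMeasurable
    ((integrableOn_Ioc_rpow_sub hab hα').congr hf.symm)
    ((integrableOn_Ioc_sub_rpow hab hβ').congr hg.symm)
  rw [integral_congr_ae hf, integral_congr_ae hg, integral_Ioc_rpow_sub hab hα',
    integral_Ioc_sub_rpow hab hβ', rpow_div_add_one_div_rpow (sub_nonneg.mpr hab) hp0 hα,
    rpow_div_add_one_div_rpow (sub_nonneg.mpr hab) hq0 hβ] at holder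
  rw [intervalIntegral.integral_of_le hab]
  refine holder.trans_eq ?_
  rw [mul_mul_mul_comm, ← Real.rpow_add' (sub_nonneg.mpr hab) (by linarith)]
  ring_nf

theorem statement10_general (μ lam p t₀ t : ℝ) (hμ1 : μ < 1)
    (hlam1 : lam ≤ 1) (hp1 : 1 - μ < p) (hp2 : p < lam)
    (htt : t₀ < t) :
    (∫ s in t₀..t, (t - s) ^ (μ - 1) * (s - t₀) ^ (lam - 1)) ≤
      ((1 - p) / (lam - p)) ^ (1 - p) * (p / (p + μ - 1)) ^ p *
        (t - t₀) ^ (μ + lam - 1) := by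
  refine (integral_rpow_sub_mul_sub_rpow_le htt.le (by linarith : 0 < p) (by linarith : p < 1)
    (by linarith : 0 < μ - 1 + p) (by linarith : 0 < lam - 1 + (1 - p))).trans_eq ?_
  ring_nf

/-- the Hölder-inequality estimate
`∫_{t₀}^{t} (t−s)^(μ−1)(s−t₀)^(λ−1) ds ≤ ((1−p)/(λ−p))^(1−p)·(p/(p+μ−1))^p·(t−t₀)^(μ+λ−1)`
valid whenever `1−μ < p < λ ≤ 1`. -/
theorem statement10 (μ lam p t₀ t : ℝ) (hμ0 : 0 < μ) (hμ1 : μ < 1)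
    (hlam0 : 0 < lam) (hlam1 : lam ≤ 1) (hp1 : 1 - μ < p) (hp2 : p < lam)
    (htt : t₀ < t) :
    (∫ s in t₀..t, (t - s) ^ (μ - 1) * (s - t₀) ^ (lam - 1)) ≤
      ((1 - p) / (lam - p)) ^ (1 - p) * (p / (p + μ - 1)) ^ p *
        (t - t₀) ^ (μ + lam - 1) :=
  statement10_general μ lam p t₀ t hμ1 hlam1 hp1 hp2 htt
end

section
/- Let 0 < μ < 1, 0 ≤ ν ≤ 1, λ = μ + ν − μν, and let p satisfy 1−μ < p < λ. Let t₀ < p₀, L > 0, and let g : [t₀,p₀] × ℝⁿ → ℝⁿ satisfy ‖g(t,u) − g(t,v)‖ ≤ L‖u−v‖ for all t ∈ [t₀,p₀] and u, v ∈ ℝⁿ. Let x₁, x₂ : (t₀,p₀] → ℝⁿ be such that s ↦ (s−t₀)^{1−λ} xᵢ(s) extend continuously to [t₀,p₀] and s ↦ (s−t₀)^{1−λ} g(s, xᵢ(s)) are continuous for i = 1, 2. Then for every t ∈ (t₀,p₀]: (t−t₀)^{1−λ} · (1/Γ(μ)) · ‖∫_{t₀}^{t} (t−s)^{μ−1} (g(s,x₁(s))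 − g(s,x₂(s))) ds‖ ≤ (L (t−t₀)^{μ}/Γ(μ)) · ((1−p)/(λ−p))^{1−p} · (p/(p+μ−1))^{p} · sup_{s∈(t₀,p₀]} ‖(s−t₀)^{1−λ} (x₁(s) − x₂(s))‖. -/
/-!
By the Lipschitz bound, the integrand is dominated by `L M (s - t₀) ^ (λ - 1) (t - s) ^ (μ - 1)`,
where `M` is the weighted supremum of `‖x₁ - x₂‖`; `M` is finite because the weighted functions
extend continuously to the compact interval `[t₀, p₀]`. Instead of evaluating this Beta integral,
Hölder's inequality with the conjugate exponents `1 / (1 - p)` and `1 / p` splits it into two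
elementary power integrals, which produce the constants `((1 - p) / (λ - p)) ^ (1 - p)` and
`(p / (p + μ - 1)) ^ p`; the remaining powers of `t - t₀` combine to `(t - t₀) ^ μ`.
-/

open MeasureTheory Set Filter Topology

/-- `f` defined on `(a,b]` extends continuously to `[a,b]`. -/
def ExtendsContV {n : ℕ} (f : ℝ → EuclideanSpace ℝ (Fin n)) (a b : ℝ) : Prop :=
  ∃ g : ℝ → EuclideanSpace ℝ (Fin n),
    ContinuousOn g (Set.Icc a b) ∧ ∀ t ∈ Set.Ioc a b, g t = f t

section RpowIntegrals

variable {a b r : ℝ}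

theorem integrableOn_rpow_sub_left (hr : -1 < r) :
    IntegrableOn (fun s => (s - a) ^ r) (Ioc a b) := by
  rcases le_or_gt a b with hab | hab
  · have h := (intervalIntegral.intervalIntegrable_rpow' (a := 0) (b := b - a) hr).comp_sub_right a
    rw [zero_add, sub_add_cancel] at h
    exact (intervalIntegrable_iff_integrableOn_Ioc_of_le hab).mp h
  · rw [Ioc_eq_empty hab.not_gt]
    exact integrableOn_empty

theorem integrableOn_rpow_sub_right (hr : -1 < r) :
    IntegrableOn (fun s => (b - s) ^ r) (Ioc a b) := by
  rcases le_or_gt a b with hab | hab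
  · have h := (intervalIntegral.intervalIntegrable_rpow' (a := 0) (b := b - a) hr).comp_sub_left b
    rw [sub_zero, sub_sub_cancel] at h
    exact (intervalIntegrable_iff_integrableOn_Ioc_of_le hab).mp h.symm
  · rw [Ioc_eq_empty hab.not_gt]
    exact integrableOn_empty

theorem setIntegral_rpow_sub_left (hr : -1 < r) (hab : a ≤ b) :
    ∫ s in Ioc a b, (s - a) ^ r = (b - a) ^ (r + 1) / (r + 1) := by
  rw [← intervalIntegral.integral_of_le hab,
    intervalIntegral.integral_comp_sub_right (fun u : ℝ => u ^ r) a, sub_self,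
    integral_rpow (Or.inl hr), Real.zero_rpow (by linarith), sub_zero]

theorem setIntegral_rpow_sub_right (hr : -1 < r) (hab : a ≤ b) :
    ∫ s in Ioc a b, (b - s) ^ r = (b - a) ^ (r + 1) / (r + 1) := by
  rw [← intervalIntegral.integral_of_le hab,
    intervalIntegral.integral_comp_sub_left (fun u : ℝ => u ^ r) b, sub_self,
    integral_rpow (Or.inl hr), Real.zero_rpow (by linarith), sub_zero]

theorem memLp_rpow_sub_left {q : ℝ} (hq : 0 < q) (hrq : -1 < r * q) :
    MemLp (fun s => (s - a) ^ r) (ENNReal.ofReal q) (volume.restrict (Ioc a b)) := by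
  have hq0 : ENNReal.ofReal q ≠ 0 := ENNReal.ofReal_ne_zero_iff.mpr hq
  rw [← memLp_norm_rpow_iff (by fun_prop : Measurable fun s : ℝ => (s - a) ^ r).aestronglyMeasurable
    hq0 ENNReal.ofReal_ne_top, ENNReal.toReal_ofReal hq.le,
    ENNReal.div_self hq0 ENNReal.ofReal_ne_top, memLp_one_iff_integrable]
  refine (integrableOn_rpow_sub_left hrq).congr_fun (fun s hs => ?_) measurableSet_Ioc
  have h0 : 0 ≤ s - a := sub_nonneg.2 hs.1.le
  rw [Real.norm_of_nonneg (Real.rpow_nonneg h0 _), ← Real.rpow_mul h0]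

theorem memLp_rpow_sub_right {q : ℝ} (hq : 0 < q) (hrq : -1 < r * q) :
    MemLp (fun s => (b - s) ^ r) (ENNReal.ofReal q) (volume.restrict (Ioc a b)) := by
  have hq0 : ENNReal.ofReal q ≠ 0 := ENNReal.ofReal_ne_zero_iff.mpr hq
  rw [← memLp_norm_rpow_iff (by fun_prop : Measurable fun s : ℝ => (b - s) ^ r).aestronglyMeasurable
    hq0 ENNReal.ofReal_ne_top, ENNReal.toReal_ofReal hq.le,
    ENNReal.div_self hq0 ENNReal.ofReal_ne_top, memLp_one_iff_integrable]
  refine (integrableOn_rpow_sub_right hrq).congr_fun (fun s hs => ?_) measurableSet_Ioc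
  have h0 : 0 ≤ b - s := sub_nonneg.2 hs.2
  rw [Real.norm_of_nonneg (Real.rpow_nonneg h0 _), ← Real.rpow_mul h0]

theorem rpow_div_exponent_rpow_one_div {x c q : ℝ} (hx : 0 ≤ x) (hc : 0 < c) :
    (x ^ c / c) ^ (1 / q) = x ^ (c / q) * c⁻¹ ^ q⁻¹ := by
  rw [div_eq_mul_inv, Real.mul_rpow (Real.rpow_nonneg hx _) (inv_nonneg.2 hc.le),
    ← Real.rpow_mul hx, one_div, div_eq_mul_inv]

theorem setIntegral_rpow_sub_left_rpow {q : ℝ} (hab : a ≤ b) (hq : 0 < q) (hrq : -1 < r * q) :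
    (∫ s in Ioc a b, ((s - a) ^ r) ^ q) ^ (1 / q) = (b - a) ^ (r + q⁻¹) * (r * q + 1)⁻¹ ^ q⁻¹ := by
  rw [setIntegral_congr_fun measurableSet_Ioc
      (fun s hs => (Real.rpow_mul (sub_nonneg.2 hs.1.le) r q).symm),
    setIntegral_rpow_sub_left hrq hab,
    rpow_div_exponent_rpow_one_div (sub_nonneg.2 hab) (by linarith)]
  congr 2
  field_simp

theorem setIntegral_rpow_sub_right_rpow {q : ℝ} (hab : a ≤ b) (hq : 0 < q) (hrq : -1 < r * q) :
    (∫ s in Ioc a b, ((b - s) ^ r) ^ q) ^ (1 / q) = (b - a) ^ (r + q⁻¹) * (r * q + 1)⁻¹ ^ q⁻¹ := by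
  rw [setIntegral_congr_fun measurableSet_Ioc
      (fun s hs => (Real.rpow_mul (sub_nonneg.2 hs.2) r q).symm),
    setIntegral_rpow_sub_right hrq hab,
    rpow_div_exponent_rpow_one_div (sub_nonneg.2 hab) (by linarith)]
  congr 2
  field_simp

end RpowIntegrals

section HolderBeta

variable {a b α β P Q : ℝ}

theorem integrableOn_rpow_sub_mul_rpow_sub (hPQ : P.HolderConjugate Q) (hα : -1 < α * P)
    (hβ : -1 < β * Q) :
    IntegrableOn (fun s => (s - a) ^ α * (b - s) ^ β) (Ioc a b) :=
  haveI := hPQ.ennrealOfReal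
  (memLp_rpow_sub_left hPQ.pos hα).integrable_mul (memLp_rpow_sub_right hPQ.symm.pos hβ)

theorem setIntegral_rpow_sub_mul_rpow_sub_le (hab : a ≤ b) (hPQ : P.HolderConjugate Q)
    (hα : -1 < α * P) (hβ : -1 < β * Q) :
    ∫ s in Ioc a b, (s - a) ^ α * (b - s) ^ β ≤
      (b - a) ^ (α + β + 1) * (α * P + 1)⁻¹ ^ P⁻¹ * (β * Q + 1)⁻¹ ^ Q⁻¹ := by
  have hleft : 0 ≤ᵐ[volume.restrict (Ioc a b)] fun s => (s - a) ^ α :=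
    (ae_restrict_mem measurableSet_Ioc).mono fun s hs => Real.rpow_nonneg (sub_nonneg.2 hs.1.le) _
  have hright : 0 ≤ᵐ[volume.restrict (Ioc a b)] fun s => (b - s) ^ β :=
    (ae_restrict_mem measurableSet_Ioc).mono fun s hs => Real.rpow_nonneg (sub_nonneg.2 hs.2) _
  have holder := integral_mul_le_Lp_mul_Lq_of_nonneg hPQ hleft hright
    (memLp_rpow_sub_left hPQ.pos hα) (memLp_rpow_sub_right hPQ.symm.pos hβ)
  rw [setIntegral_rpow_sub_left_rpow hab hPQ.pos hα,
    setIntegral_rpow_sub_right_rpow hab hPQ.symm.pos hβ] at holder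
  have hP := hPQ.ne_zero
  have hQ := hPQ.symm.ne_zero
  have hαP : 0 ≤ α + P⁻¹ := by
    rw [show α + P⁻¹ = (α * P + 1) / P by field_simp]
    exact div_nonneg (by linarith) hPQ.nonneg
  have hβQ : 0 ≤ β + Q⁻¹ := by
    rw [show β + Q⁻¹ = (β * Q + 1) / Q by field_simp]
    exact div_nonneg (by linarith) hPQ.symm.nonneg
  refine holder.trans_eq ?_
  rw [show α + β + 1 = (α + P⁻¹) + (β + Q⁻¹) by linarith [hPQ.inv_add_inv_eq_one],
    Real.rpow_add_of_nonneg (sub_nonneg.2 hab) hαP hβQ]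
  ring

end HolderBeta

theorem norm_intervalIntegral_rpow_smul_le {E : Type*} [NormedAddCommGroup E] [NormedSpace ℝ E]
    {f : ℝ → E} {a b α β p C : ℝ} (hab : a ≤ b) (hp0 : 0 < p) (hp1 : p < 1) (hα : p - 1 < α)
    (hβ : -p < β) (hC : 0 ≤ C) (hf : ∀ s ∈ Ioc a b, ‖f s‖ ≤ C * (s - a) ^ α) :
    ‖∫ s in a..b, (b - s) ^ β • f s‖ ≤
      C * ((b - a) ^ (α + β + 1) * ((1 - p) / (α + 1 - p)) ^ (1 - p) * (p / (β + p)) ^ p) := by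
  have hPQ := Real.HolderConjugate.one_sub_inv_inv hp0 hp1
  have hαP : -1 < α * (1 - p)⁻¹ := by
    rw [← div_eq_mul_inv, lt_div_iff₀ (by linarith)]; linarith
  have hβQ : -1 < β * p⁻¹ := by
    rw [← div_eq_mul_inv, lt_div_iff₀ hp0]; linarith
  have hbeta := setIntegral_rpow_sub_mul_rpow_sub_le hab hPQ hαP hβQ
  have h1p : 1 - p ≠ 0 := by linarith
  have hαp : α + 1 - p ≠ 0 := by linarith
  have hβp : β + p ≠ 0 := by linarith
  rw [show (α * (1 - p)⁻¹ + 1)⁻¹ = (1 - p) / (α + 1 - p) by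
      rw [inv_eq_iff_eq_inv, inv_div]; field_simp; ring,
    show (β * p⁻¹ + 1)⁻¹ = p / (β + p) by rw [inv_eq_iff_eq_inv, inv_div]; field_simp,
    inv_inv, inv_inv] at hbeta
  rw [intervalIntegral.integral_of_le hab]
  calc ‖∫ s in Ioc a b, (b - s) ^ β • f s‖
      ≤ ∫ s in Ioc a b, C * ((s - a) ^ α * (b - s) ^ β) := by
        refine norm_integral_le_of_norm_le
          ((integrableOn_rpow_sub_mul_rpow_sub hPQ hαP hβQ).const_mul C) ?_
        filter_upwards [ae_restrict_mem measurableSet_Ioc] with s hs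
        have hbs : 0 ≤ (b - s) ^ β := Real.rpow_nonneg (sub_nonneg.2 hs.2) _
        rw [norm_smul, Real.norm_of_nonneg hbs, mul_comm, ← mul_assoc]
        exact mul_le_mul_of_nonneg_right (hf s hs) hbs
    _ = C * ∫ s in Ioc a b, (s - a) ^ α * (b - s) ^ β := integral_const_mul C _
    _ ≤ _ := mul_le_mul_of_nonneg_left hbeta hC

theorem norm_le_mul_rpow_neg_of_norm_rpow_smul_le {E : Type*} [NormedAddCommGroup E]
    [NormedSpace ℝ E] {x : E} {c e M : ℝ} (hc : 0 < c) (h : ‖c ^ e • x‖ ≤ M) :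
    ‖x‖ ≤ M * c ^ (-e) := by
  rw [norm_smul, Real.norm_of_nonneg (Real.rpow_nonneg hc.le _)] at h
  rw [Real.rpow_neg hc.le, ← div_eq_mul_inv, le_div_iff₀ (by positivity), mul_comm]
  exact h

theorem ExtendsContV.sub {n : ℕ} {f g : ℝ → EuclideanSpace ℝ (Fin n)} {a b : ℝ}
    (hf : ExtendsContV f a b) (hg : ExtendsContV g a b) : ExtendsContV (f - g) a b := by
  obtain ⟨F, hFc, hF⟩ := hf
  obtain ⟨G, hGc, hG⟩ := hg
  exact ⟨F - G, hFc.sub hGc, fun t ht => by simp only [Pi.sub_apply, hF t ht, hG t ht]⟩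

theorem ExtendsContV.bddAbove_norm {n : ℕ} {f : ℝ → EuclideanSpace ℝ (Fin n)} {a b : ℝ}
    (hf : ExtendsContV f a b) : BddAbove ((fun s => ‖f s‖) '' Ioc a b) := by
  obtain ⟨F, hFc, hF⟩ := hf
  refine ((isCompact_Icc.image_of_continuousOn hFc.norm).bddAbove).mono ?_
  rintro - ⟨s, hs, rfl⟩
  exact ⟨s, Ioc_subset_Icc_self hs, congrArg norm (hF s hs)⟩

theorem statement11_general (n : ℕ) (μ ν lam p L t₀ p₀ : ℝ)
    (hμ1 : μ < 1) (hν1 : ν ≤ 1)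
    (hlam : lam = μ + ν - μ * ν) (hp1 : 1 - μ < p) (hp2 : p < lam)
    (hL : 0 < L)
    (g : ℝ → EuclideanSpace ℝ (Fin n) → EuclideanSpace ℝ (Fin n))
    (hg : ∀ t ∈ Set.Icc t₀ p₀, ∀ u v : EuclideanSpace ℝ (Fin n),
      ‖g t u - g t v‖ ≤ L * ‖u - v‖)
    (x₁ x₂ : ℝ → EuclideanSpace ℝ (Fin n))
    (hx₁ : ExtendsContV (fun s => (s - t₀) ^ (1 - lam) • x₁ s) t₀ p₀)
    (hx₂ : ExtendsContV (fun s => (s - t₀) ^ (1 - lam) • x₂ s) t₀ p₀) :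
    ∀ t ∈ Set.Ioc t₀ p₀,
      (t - t₀) ^ (1 - lam) * ((1 / Real.Gamma μ) *
          ‖∫ s in t₀..t, (t - s) ^ (μ - 1) • (g s (x₁ s) - g s (x₂ s))‖) ≤
        (L * (t - t₀) ^ μ / Real.Gamma μ) * ((1 - p) / (lam - p)) ^ (1 - p) *
          (p / (p + μ - 1)) ^ p *
          sSup ((fun s => ‖(s - t₀) ^ (1 - lam) • (x₁ s - x₂ s)‖) '' Set.Ioc t₀ p₀) := by
  rintro t ⟨ht₀, htp₀⟩
  have hlam1 : lam ≤ 1 := by nlinarith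
  have hp0 : 0 < p := by linarith
  have hp1' : p < 1 := by linarith
  have hΓ : 0 < Real.Gamma μ := Real.Gamma_pos_of_pos (by linarith)
  set M := sSup ((fun s => ‖(s - t₀) ^ (1 - lam) • (x₁ s - x₂ s)‖) '' Set.Ioc t₀ p₀)
  have hM : ∀ s ∈ Ioc t₀ p₀, ‖(s - t₀) ^ (1 - lam) • (x₁ s - x₂ s)‖ ≤ M := by
    have hbdd := (hx₁.sub hx₂).bddAbove_norm
    simp only [Pi.sub_def, ← smul_sub] at hbdd
    exact fun s hs => le_csSup hbdd ⟨s, hs, rfl⟩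
  have hM0 : 0 ≤ M := (norm_nonneg _).trans (hM t ⟨ht₀, htp₀⟩)
  have hdiff : ∀ s ∈ Ioc t₀ t, ‖g s (x₁ s) - g s (x₂ s)‖ ≤ L * M * (s - t₀) ^ (lam - 1) := by
    intro s hs
    have hx := norm_le_mul_rpow_neg_of_norm_rpow_smul_le (sub_pos.2 hs.1)
      (hM s ⟨hs.1, hs.2.trans htp₀⟩)
    rw [neg_sub] at hx
    calc ‖g s (x₁ s) - g s (x₂ s)‖ ≤ L * ‖x₁ s - x₂ s‖ := hg s ⟨hs.1.le, hs.2.trans htp₀⟩ _ _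
      _ ≤ L * M * (s - t₀) ^ (lam - 1) := by rw [mul_assoc]; gcongr
  have key := norm_intervalIntegral_rpow_smul_le ht₀.le hp0 hp1' (α := lam - 1) (β := μ - 1)
    (by linarith) (by linarith) (by positivity) hdiff
  rw [show lam - 1 + 1 - p = lam - p by ring, show μ - 1 + p = p + μ - 1 by ring] at key
  have hpow : (t - t₀) ^ μ = (t - t₀) ^ (1 - lam) * (t - t₀) ^ (lam - 1 + (μ - 1) + 1) := by
    rw [← Real.rpow_add (sub_pos.2 ht₀)]
    ring_nf
  calc (t - t₀) ^ (1 - lam) * ((1 / Real.Gamma μ) *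
          ‖∫ s in t₀..t, (t - s) ^ (μ - 1) • (g s (x₁ s) - g s (x₂ s))‖)
      ≤ (t - t₀) ^ (1 - lam) * ((1 / Real.Gamma μ) *
          (L * M * ((t - t₀) ^ (lam - 1 + (μ - 1) + 1) *
            ((1 - p) / (lam - p)) ^ (1 - p) * (p / (p + μ - 1)) ^ p))) := by gcongr
    _ = _ := by rw [hpow]; ring

/-- weighted Hölder estimate for the difference of the
Riemann–Liouville fractional integral terms built from a Lipschitz nonlinearity. -/
theorem statement11 (n : ℕ) (μ ν lam p L t₀ p₀ : ℝ)
    (hμ0 : 0 < μ) (hμ1 : μ < 1) (hν0 : 0 ≤ ν) (hν1 : ν ≤ 1)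
    (hlam : lam = μ + ν - μ * ν) (hp1 : 1 - μ < p) (hp2 : p < lam)
    (ht : t₀ < p₀) (hL : 0 < L)
    (g : ℝ → EuclideanSpace ℝ (Fin n) → EuclideanSpace ℝ (Fin n))
    (hg : ∀ t ∈ Set.Icc t₀ p₀, ∀ u v : EuclideanSpace ℝ (Fin n),
      ‖g t u - g t v‖ ≤ L * ‖u - v‖)
    (x₁ x₂ : ℝ → EuclideanSpace ℝ (Fin n))
    (hx₁ : ExtendsContV (fun s => (s - t₀) ^ (1 - lam) • x₁ s) t₀ p₀)
    (hx₂ : ExtendsContV (fun s => (s - t₀) ^ (1 - lam) • x₂ s) t₀ p₀)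
    (hgx₁ : ContinuousOn (fun s => (s - t₀) ^ (1 - lam) • g s (x₁ s)) (Set.Ioc t₀ p₀))
    (hgx₂ : ContinuousOn (fun s => (s - t₀) ^ (1 - lam) • g s (x₂ s)) (Set.Ioc t₀ p₀)) :
    ∀ t ∈ Set.Ioc t₀ p₀,
      (t - t₀) ^ (1 - lam) * ((1 / Real.Gamma μ) *
          ‖∫ s in t₀..t, (t - s) ^ (μ - 1) • (g s (x₁ s) - g s (x₂ s))‖) ≤
        (L * (t - t₀) ^ μ / Real.Gamma μ) * ((1 - p) / (lam - p)) ^ (1 - p) *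
          (p / (p + μ - 1)) ^ p *
          sSup ((fun s => ‖(s - t₀) ^ (1 - lam) • (x₁ s - x₂ s)‖) '' Set.Ioc t₀ p₀) :=
  statement11_general n μ ν lam p L t₀ p₀ hμ1 hν1 hlam hp1 hp2 hL g hg x₁ x₂ hx₁ hx₂
end
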